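/- arXiv:1305.4913 — 4 statements merged into one kernel-verified Lean document; each statement's English description precedes it below -/
import Mathlib

section
/- Let a ∈ Z/nZ and let X be the S_d-orbit of (0,...,0,a) in (Z/nZ)^d. Then the image σ_X((Z/nZ)^d) equals the image of the supercharacter σ_{X'}((Z/rZ)^d) where r = n/gcd(n,a) and X' is the S_d-orbit of (0,...,0,1) in (Z/rZ)^d. -/
open Finset

/-- `e n z` = exp(2πi·z/n) for `z : ZMod n`. -/
noncomputable def e (n : ℕ) (z : ZMod n) : ℂ :=
  Complex.exp (2 * Real.pi * Complex.I * z.val / n)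

/-- Dot product on `(ZMod n)^d`. -/
def dot {n d : ℕ} (x y : Fin d → ZMod n) : ZMod n := ∑ i, x i * y i

/-- The orbit `S_d · x` of `x` under coordinate permutation, as a `Finset`. -/
noncomputable def orbit (n d : ℕ) (x : Fin d → ZMod n) : Finset (Fin d → ZMod n) :=
  Finset.image (fun π : Equiv.Perm (Fin d) => x ∘ π) Finset.univ

/-- The symmetric supercharacter attached to the orbit of `x`. -/
noncomputable def σ (n d : ℕ) (x y : Fin d → ZMod n) : ℂ :=
  ∑ v ∈ orbit n d x, e n (dot v y)

noncomputable def E (r k : ℕ) : ℂ := Complex.exp (2 * Real.pi * Complex.I * k / r)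

lemma e_eq (n : ℕ) (z : ZMod n) : e n z = E n z.val := rfl

lemma E_mod (r : ℕ) (hr : 0 < r) (k : ℕ) : E r k = E r (k % r) := by
  have hk : k = r * (k / r) + k % r := (Nat.div_add_mod k r).symm
  have hrC : (r : ℂ) ≠ 0 := Nat.cast_ne_zero.mpr hr.ne'
  rw [E, E]
  conv_lhs => rw [hk]
  push_cast
  have : 2 * (Real.pi:ℂ) * Complex.I * ((r:ℂ) * (↑(k / r)) + ↑(k % r)) / r
      = (↑(k / r) : ℂ) * (2 * Real.pi * Complex.I) + 2 * Real.pi * Complex.I * ↑(k % r) / r := by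
    field_simp
  rw [this, Complex.exp_add]
  have h1 : Complex.exp ((↑(k / r) : ℂ) * (2 * Real.pi * Complex.I)) = 1 := by
    have := Complex.exp_int_mul_two_pi_mul_I (k / r : ℤ)
    simpa using this
  rw [h1, one_mul]

lemma E_congr {r : ℕ} (hr : 0 < r) {A B : ℕ} (h : A % r = B % r) : E r A = E r B := by
  rw [E_mod r hr A, E_mod r hr B, h]

lemma E_mul_left {g : ℕ} (r k : ℕ) (hg : g ≠ 0) : E (g * r) (g * k) = E r k := by
  rw [E, E]
  congr 1
  rw [mul_div_assoc, mul_div_assoc]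
  congr 1
  push_cast
  rw [mul_div_mul_left _ _ (by exact_mod_cast hg : (g:ℂ) ≠ 0)]

lemma range_sum_subset {α β : Type*} (d : ℕ) (f : α → ℂ) (g : β → ℂ)
    (h : Set.range f ⊆ Set.range g) :
    Set.range (fun y : Fin d → α => ∑ i, f (y i)) ⊆
      Set.range (fun y : Fin d → β => ∑ i, g (y i)) := by
  rintro _ ⟨y, rfl⟩
  choose z hz using fun i => h (Set.mem_range_self (y i))
  exact ⟨z, by simp [hz]⟩

lemma range_sum_eq {α β : Type*} (d : ℕ) (f : α → ℂ) (g : β → ℂ)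
    (h : Set.range f = Set.range g) :
    Set.range (fun y : Fin d → α => ∑ i, f (y i)) =
      Set.range (fun y : Fin d → β => ∑ i, g (y i)) :=
  le_antisymm (range_sum_subset d f g h.le) (range_sum_subset d g f h.ge)

lemma orbit_basis (n d : ℕ) (hd : 1 ≤ d) (c : ZMod n) (hc : c ≠ 0) :
    orbit n d (fun i : Fin d => if (i : ℕ) = 0 then c else 0)
      = Finset.image (fun i : Fin d => fun j => if j = i then c else 0) Finset.univ := by
  have h0 : (0 : ℕ) < d := hd
  have hfin : ∀ x : Fin d, ((x : ℕ) = 0 ↔ x = ⟨0, h0⟩) :=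
    fun x => ⟨fun h => Fin.ext h, fun h => by rw [h]⟩
  ext v
  simp only [orbit, Finset.mem_image, Finset.mem_univ, true_and]
  constructor
  · rintro ⟨π, rfl⟩
    refine ⟨π.symm ⟨0, h0⟩, ?_⟩
    funext j
    simp only [Function.comp_apply]
    have : ((π j : Fin d) : ℕ) = 0 ↔ j = π.symm ⟨0, h0⟩ := by
      rw [hfin, Equiv.apply_eq_iff_eq_symm_apply]
    simp [this]
  · rintro ⟨i, rfl⟩
    refine ⟨Equiv.swap ⟨0, h0⟩ i, ?_⟩
    funext j
    simp only [Function.comp_apply]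
    have : ((Equiv.swap (⟨0, h0⟩ : Fin d) i j : Fin d) : ℕ) = 0 ↔ j = i := by
      rw [hfin, Equiv.apply_eq_iff_eq_symm_apply, Equiv.symm_swap, Equiv.swap_apply_left]
    simp [this]

lemma sigma_eq (n d : ℕ) (hd : 1 ≤ d) (c : ZMod n) (hc : c ≠ 0)
    (y : Fin d → ZMod n) :
    σ n d (fun i : Fin d => if (i : ℕ) = 0 then c else 0) y = ∑ i, e n (c * y i) := by
  rw [σ, orbit_basis n d hd c hc, Finset.sum_image]
  · apply Finset.sum_congr rfl
    intro i _
    congr 1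
    rw [dot]
    rw [Finset.sum_eq_single i]
    · simp
    · intro j _ hj; simp [hj]
    · simp
  · intro i _ i' _ hii
    by_contra hne
    have := congrFun hii i
    simp [hne] at this
    exact hc this

theorem stmt_12 (n d : ℕ) (hn : 0 < n) (hd : 1 ≤ d) (a : ZMod n)
    (xa : Fin d → ZMod n) (hxa : xa = fun i : Fin d => if (i : ℕ) = 0 then a else 0)
    (r : ℕ) (hr : r = n / Nat.gcd n a.val)
    (x1 : Fin d → ZMod r) (hx1 : x1 = fun i : Fin d => if (i : ℕ) = 0 then (1 : ZMod r) else 0) :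
    Set.range (σ n d xa) = Set.range (σ r d x1) := by
  haveI : NeZero n := ⟨hn.ne'⟩
  by_cases ha : a = 0
  · -- both sides are the constant 1
    subst ha
    have hr1 : r = 1 := by
      rw [hr, ZMod.val_zero, Nat.gcd_zero_right, Nat.div_self hn]
    subst hr1
    have hxa0 : xa = fun _ => 0 := by rw [hxa]; funext i; simp
    have hx10 : x1 = fun _ => 0 := by funext i; exact Subsingleton.elim _ _
    have h1 : ∀ y, σ n d xa y = 1 := by
      intro y
      rw [σ, hxa0, orbit]
      have : (Finset.image (fun π : Equiv.Perm (Fin d) => (fun _ : Fin d => (0 : ZMod n)) ∘ π)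
          Finset.univ) = {fun _ => 0} := by
        apply Finset.eq_singleton_iff_unique_mem.mpr
        constructor
        · exact Finset.mem_image.mpr ⟨1, Finset.mem_univ _, rfl⟩
        · rintro v hv
          obtain ⟨π, _, rfl⟩ := Finset.mem_image.mp hv
          rfl
      rw [this, Finset.sum_singleton]
      have : dot (fun _ : Fin d => (0 : ZMod n)) y = 0 := by simp [dot]
      rw [this, e, ZMod.val_zero]
      simp
    have h2 : ∀ y, σ 1 d x1 y = 1 := by
      intro y
      rw [σ, hx10, orbit]
      have : (Finset.image (fun π : Equiv.Perm (Fin d) => (fun _ : Fin d => (0 : ZMod 1)) ∘ π)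
          Finset.univ) = {fun _ => 0} := by
        apply Finset.eq_singleton_iff_unique_mem.mpr
        exact ⟨Finset.mem_image.mpr ⟨1, Finset.mem_univ _, rfl⟩,
          fun v hv => by obtain ⟨π, _, rfl⟩ := Finset.mem_image.mp hv; rfl⟩
      rw [this, Finset.sum_singleton]
      have hdot : dot (fun _ : Fin d => (0 : ZMod 1)) y = 0 := by simp [dot]
      rw [hdot, e, ZMod.val_zero]
      simp
    rw [funext h1, funext h2, Set.range_const, Set.range_const]
  · -- main case
    set g := Nat.gcd n a.val with hg
    have hgpos : 0 < g := Nat.gcd_pos_of_pos_left _ hn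
    have hng : n = g * r := by rw [hr]; exact (Nat.mul_div_cancel' (Nat.gcd_dvd_left n a.val)).symm
    have hrpos : 0 < r := by
      rcases Nat.eq_zero_or_pos r with h | h
      · rw [h, mul_zero] at hng; omega
      · exact h
    haveI : NeZero r := ⟨hrpos.ne'⟩
    have hrn : r ≤ n := by rw [hng]; exact Nat.le_mul_of_pos_left r hgpos
    have haval : a.val ≠ 0 := fun h => ha ((ZMod.val_eq_zero a).mp h)
    have hr1 : r ≠ 1 := by
      intro h
      rw [h, mul_one] at hng
      have hdvd : n ∣ a.val := by
        have h2 : Nat.gcd n a.val ∣ a.val := Nat.gcd_dvd_right n a.val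
        rw [← hg, ← hng] at h2
        exact h2
      have := Nat.le_of_dvd (Nat.pos_of_ne_zero haval) hdvd
      have := ZMod.val_lt a
      omega
    haveI : Fact (1 < r) := ⟨by omega⟩
    have h1 : (1 : ZMod r) ≠ 0 := one_ne_zero
    set c' := a.val / g with hc'
    have hcg : a.val = g * c' := (Nat.mul_div_cancel' (Nat.gcd_dvd_right n a.val)).symm
    have hcop : Nat.Coprime c' r := by
      have := Nat.coprime_div_gcd_div_gcd (m := n) (n := a.val) hgpos
      rw [← hr] at this
      exact this.symm
    -- key range identity
    have hranges : Set.range (fun z : ZMod n => e n (a * z))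
        = Set.range (fun w : ZMod r => e r (1 * w)) := by
      have lhs_eq : ∀ z : ZMod n, e n (a * z) = E r (c' * z.val) := by
        intro z
        rw [e_eq]
        have : E n ((a * z).val) = E n (a.val * z.val) :=
          E_congr hn (by rw [ZMod.val_mul]; exact Nat.mod_mod_of_dvd _ dvd_rfl)
        rw [this]
        have : a.val * z.val = g * (c' * z.val) := by rw [hcg]; ring
        rw [this]
        have h4 := E_mul_left (g := g) r (c' * z.val) hgpos.ne'
        rw [← hng] at h4
        exact h4
      have rhs_eq : ∀ w : ZMod r, e r (1 * w) = E r w.val := by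
        intro w; rw [one_mul, e_eq]
      rw [funext lhs_eq, funext rhs_eq]
      apply le_antisymm
      · rintro _ ⟨z, rfl⟩
        refine ⟨((c' * z.val : ℕ) : ZMod r), ?_⟩
        apply E_congr hrpos
        rw [ZMod.val_natCast]
        exact Nat.mod_mod_of_dvd _ dvd_rfl
      · rintro _ ⟨w, rfl⟩
        have hu : IsUnit ((c' : ℕ) : ZMod r) := (ZMod.isUnit_iff_coprime c' r).mpr hcop
        set u : ZMod r := ((c' : ℕ) : ZMod r)⁻¹ * w with hu_def
        refine ⟨((u.val : ℕ) : ZMod n), ?_⟩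
        apply E_congr hrpos
        have hz : (((u.val : ℕ) : ZMod n)).val = u.val := by
          rw [ZMod.val_natCast, Nat.mod_eq_of_lt (lt_of_lt_of_le (ZMod.val_lt u) hrn)]
        rw [hz]
        have : ((c' * u.val : ℕ) : ZMod r) = ((w.val : ℕ) : ZMod r) := by
          push_cast
          rw [ZMod.natCast_val, ZMod.natCast_val, ZMod.cast_id, ZMod.cast_id, hu_def,
            ← mul_assoc, ZMod.mul_inv_of_unit _ hu, one_mul]
        have := (ZMod.natCast_eq_natCast_iff _ _ _).mp this
        exact this
    -- assemble
    rw [hxa, hx1, funext (sigma_eq n d hd a ha), funext (sigma_eq r d hd 1 h1)]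
    exact range_sum_eq d _ _ hranges
end

section
/- If X is an S_d-orbit in (Z/nZ)^d satisfying X = r·1 − X for some r ∈ Z/nZ, then for every y ∈ (Z/nZ)^d there is an integer j (depending on y) with σ_X(y) = e(j·gcd(r,n)/n)·conjugate(σ_X(y)). Consequently, every nonzero value σ_X(y) satisfies σ_X(y)/|σ_X(y)| = ±e(j·gcd(r,n)/(2n)) for some integer j. -/
open Finset

/-- Congruent integers give the same exponential value. -/
lemma exp_congr (n : ℕ) (hn : 0 < n) {a b : ℤ} (h : (n : ℤ) ∣ (a - b)) :
    Complex.exp (2 * Real.pi * Complex.I * a / n) =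
    Complex.exp (2 * Real.pi * Complex.I * b / n) := by
  obtain ⟨k, hk⟩ := h
  have hn' : (n : ℂ) ≠ 0 := Nat.cast_ne_zero.mpr hn.ne'
  have ha : (a : ℂ) = (b : ℂ) + (k : ℂ) * (n : ℂ) := by
    have : a = b + k * n := by linarith [hk]
    exact_mod_cast this
  rw [Complex.exp_eq_exp_iff_exists_int]
  refine ⟨k, ?_⟩
  rw [ha]
  field_simp

lemma e_eq_int (n : ℕ) (hn : 0 < n) (z : ZMod n) (m : ℤ) (h : (m : ZMod n) = z) :
    e n z = Complex.exp (2 * Real.pi * Complex.I * m / n) := by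
  haveI : NeZero n := ⟨hn.ne'⟩
  have h1 : (((z.val : ℤ) - m : ℤ) : ZMod n) = 0 := by
    push_cast
    rw [ZMod.natCast_val, ZMod.cast_id, h]
    ring
  have h2 : (n : ℤ) ∣ ((z.val : ℤ) - m) := (ZMod.intCast_zmod_eq_zero_iff_dvd _ n).mp h1
  have := exp_congr n hn h2
  unfold e
  rw [← this]
  push_cast
  ring_nf

lemma e_ne_zero (n : ℕ) (z : ZMod n) : e n z ≠ 0 := Complex.exp_ne_zero _

lemma e_conj (n : ℕ) (z : ZMod n) :
    (starRingEnd ℂ) (e n z) = Complex.exp (-(2 * Real.pi * Complex.I * z.val / n)) := by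
  unfold e
  rw [← Complex.exp_conj]
  congr 1
  simp [map_div₀, Complex.conj_I, map_ofNat]
  ring

theorem stmt_13 (n d : ℕ) (hn : 0 < n) (hd : 0 < d) (x : Fin d → ZMod n) (r : ZMod n)
    (hX : orbit n d x =
      Finset.image (fun v : Fin d → ZMod n => fun i => r - v i) (orbit n d x)) :
    ∀ y : Fin d → ZMod n,
      (∃ j : ℤ, σ n d x y =
          Complex.exp (2 * Real.pi * Complex.I * (j * Nat.gcd r.val n) / n) *
            (starRingEnd ℂ) (σ n d x y)) ∧
        (σ n d x y ≠ 0 → ∃ j : ℤ, ∃ s : ℂ, (s = 1 ∨ s = -1) ∧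
          σ n d x y / ((‖σ n d x y‖ : ℝ) : ℂ) =
            s * Complex.exp (2 * Real.pi * Complex.I * (j * Nat.gcd r.val n) / (2 * n))) := by
  intro y
  haveI : NeZero n := ⟨hn.ne'⟩
  set g : ℕ := Nat.gcd r.val n with hgdef
  set T : ZMod n := ∑ i, y i with hT
  have hgdvd : g ∣ r.val * T.val := Dvd.dvd.mul_right (Nat.gcd_dvd_left _ _) _
  set j : ℕ := r.val * T.val / g with hjdef
  have hjg : j * g = r.val * T.val := Nat.div_mul_cancel hgdvd
  set E : ℂ := Complex.exp (2 * Real.pi * Complex.I * ((j : ℤ) * g) / n) with hE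
  -- the key identity
  have hginj : Function.Injective (fun v : Fin d → ZMod n => fun i => r - v i) := by
    intro a b hab
    funext i
    have := congrFun hab i
    simp only at this
    linear_combination -this
  have hconj : (starRingEnd ℂ) (σ n d x y) =
      ∑ v ∈ orbit n d x, Complex.exp (-(2 * Real.pi * Complex.I * (dot v y).val / n)) := by
    unfold σ
    rw [map_sum]
    exact Finset.sum_congr rfl fun v _ => e_conj n _
  have hjgmod : (j : ZMod n) * (g : ZMod n) = r * T := by
    have h0 : ((j * g : ℕ) : ZMod n) = ((r.val * T.val : ℕ) : ZMod n) := by rw [hjg]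
    push_cast at h0
    rwa [ZMod.natCast_val, ZMod.cast_id, ZMod.natCast_val, ZMod.cast_id] at h0
  have term : ∀ a : ZMod n, e n (r * T - a) =
      E * Complex.exp (-(2 * Real.pi * Complex.I * a.val / n)) := by
    intro a
    have h1 : (((j * g : ℤ) - (a.val : ℤ) : ℤ) : ZMod n) = r * T - a := by
      push_cast
      rw [hjgmod, ZMod.natCast_val, ZMod.cast_id]
    rw [e_eq_int n hn _ _ h1, hE, ← Complex.exp_add]
    congr 1
    have hn' : (n : ℂ) ≠ 0 := Nat.cast_ne_zero.mpr hn.ne'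
    field_simp
    push_cast
    ring
  have key : σ n d x y = E * (starRingEnd ℂ) (σ n d x y) := by
    conv_lhs => rw [σ, hX]
    rw [Finset.sum_image (fun a _ b _ h => hginj h)]
    rw [hconj, Finset.mul_sum]
    refine Finset.sum_congr rfl fun v _ => ?_
    have hdot : dot (fun i => r - v i) y = r * T - dot v y := by
      simp only [dot, hT, Finset.mul_sum, ← Finset.sum_sub_distrib]
      exact Finset.sum_congr rfl fun i _ => by ring
    rw [hdot, term]
  constructor
  · refine ⟨(j : ℤ), ?_⟩
    nth_rewrite 1 [key]
    rw [hE]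
  · intro hσ
    set c : ℂ := Complex.exp (2 * Real.pi * Complex.I * ((j : ℤ) * g) / (2 * n)) with hc
    have habs : ((‖σ n d x y‖ : ℝ) : ℂ) ≠ 0 :=
      Complex.ofReal_ne_zero.mpr (norm_ne_zero_iff.mpr hσ)
    set u : ℂ := σ n d x y / ((‖σ n d x y‖ : ℝ) : ℂ) with hu
    have hc2 : c ^ 2 = E := by
      rw [hc, hE, sq, ← Complex.exp_add]
      congr 1
      have hn' : (n : ℂ) ≠ 0 := Nat.cast_ne_zero.mpr hn.ne'
      field_simp
      ring
    have hss : σ n d x y * σ n d x y = E * ((‖σ n d x y‖ : ℝ) : ℂ) ^ 2 := by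
      nth_rewrite 1 [key]
      rw [mul_assoc, mul_comm ((starRingEnd ℂ) (σ n d x y)) (σ n d x y), Complex.mul_conj]
      congr 1
      rw [← Complex.sq_norm]
      push_cast
      ring
    have hsq : u ^ 2 = c ^ 2 := by
      rw [hc2, hu, div_pow, sq, hss, mul_div_assoc,
        div_self (pow_ne_zero 2 habs), mul_one]
    have : (u - c) * (u + c) = 0 := by ring_nf; linear_combination hsq
    rcases mul_eq_zero.mp this with h | h
    · exact ⟨(j : ℤ), 1, Or.inl rfl, by rw [one_mul, ← hc]; linear_combination h⟩
    · exact ⟨(j : ℤ), -1, Or.inr rfl, by rw [← hc]; linear_combination h⟩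
end

section
/- Let d ≥ 2 and X be the S_d-orbit of the vector (0,1,1,...,1,2) (one 0, one 2, and d−2 ones) in (Z/nZ)^d. Then for every y = (y_1,...,y_d), σ_X(y) = e([y]/n)·(|Σ_{j=1}^d e(y_j/n)|² − d), where [y] = y_1 + ⋯ + y_d mod n. -/
open Finset

/-!
The orbit consists of the vectors with `0` at `i`, `2` at `j` and `1` elsewhere, one for each
ordered pair `i ≠ j`, and these are distinct because `0, 1, 2` are distinct mod `n ≥ 3`. Pairing
such a vector with `y` gives `[y] + y_j - y_i`, so with `ζ_k = e(y_k/n)` we get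
`σ_X(y) = e([y]/n) · ∑_{i ≠ j} ζ_j conj ζ_i`, and the off-diagonal sum is `|∑ ζ_k|²` minus the
`d` diagonal terms `|ζ_i|² = 1`.
-/

open ComplexConjugate

lemma e_eq_stdAddChar (n : ℕ) [NeZero n] (z : ZMod n) : e n z = ZMod.stdAddChar z := by
  rw [ZMod.stdAddChar_apply, ZMod.toCircle_apply, e]

lemma norm_e (n : ℕ) [NeZero n] (z : ZMod n) : ‖e n z‖ = 1 := by
  rw [e_eq_stdAddChar]
  exact AddChar.norm_apply _ _

lemma sum_offDiag_mul_conj {ι : Type*} [Fintype ι] [DecidableEq ι] (z : ι → ℂ)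
    (hz : ∀ i, ‖z i‖ = 1) :
    ∑ p ∈ univ.offDiag, z p.2 * conj (z p.1) = ‖∑ i, z i‖ ^ 2 - Fintype.card ι := by
  have hdiag : ∑ p ∈ univ.diag, z p.2 * conj (z p.1) = Fintype.card ι := by
    simp [Complex.mul_conj, Complex.normSq_eq_norm_sq, hz]
  have hsquare : ∑ p ∈ univ ×ˢ univ, z p.2 * conj (z p.1) = ‖∑ i, z i‖ ^ 2 := by
    rw [← Complex.mul_conj', map_sum, sum_mul_sum, sum_product_right]
  rw [← hdiag, ← hsquare, ← diag_union_offDiag, sum_union (disjoint_diag_offDiag _)]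
  ring

section MarkedVector

variable {ι α : Type*} [DecidableEq ι]

def markedVec (a b c : α) (i j : ι) : ι → α :=
  fun k => if k = i then a else if k = j then b else c

lemma markedVec_comp_perm (a b c : α) (i j : ι) (π : Equiv.Perm ι) :
    markedVec a b c i j ∘ π = markedVec a b c (π.symm i) (π.symm j) := by
  ext k
  simp [markedVec, Equiv.eq_symm_apply]

lemma markedVec_injOn {a b c : α} (hab : a ≠ b) (hac : a ≠ c) (hbc : b ≠ c) :
    Set.InjOn (fun p : ι × ι => markedVec a b c p.1 p.2) {p | p.1 ≠ p.2} := by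
  rintro ⟨i, j⟩ hij ⟨i', j'⟩ hij' h
  have hi : i = i' := by
    by_contra hne
    have := congrFun h i
    simp only [markedVec, if_neg hne] at this
    split_ifs at this <;> contradiction
  subst hi
  have hj : j = j' := by
    by_contra hne
    have := congrFun h j
    simp only [markedVec, if_neg (Ne.symm hij), if_neg hne] at this
    contradiction
  rw [hj]

end MarkedVector

lemma orbit_markedVec {n d : ℕ} (a b c : ZMod n) {i j : Fin d} (hij : i ≠ j) :
    orbit n d (markedVec a b c i j) = univ.offDiag.image fun p => markedVec a b c p.1 p.2 := by
  ext v
  simp only [orbit, mem_image, mem_univ, true_and, mem_offDiag, markedVec_comp_perm, Prod.exists]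
  constructor
  · rintro ⟨π, rfl⟩
    exact ⟨π.symm i, π.symm j, by simpa using hij, rfl⟩
  · rintro ⟨i', j', hij', rfl⟩
    obtain ⟨π, hπ⟩ := Equiv.Perm.exists_extending_pair ![i', j'] ![i, j]
      (injective_pair_iff_ne.2 hij') (injective_pair_iff_ne.2 hij)
    refine ⟨π, ?_⟩
    have h0 : π i' = i := hπ 0
    have h1 : π j' = j := hπ 1
    rw [← h0, ← h1, π.symm_apply_apply, π.symm_apply_apply]

lemma dot_markedVec {n d : ℕ} (a b c : ZMod n) {i j : Fin d} (hij : i ≠ j) (y : Fin d → ZMod n) :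
    dot (markedVec a b c i j) y = c * ∑ k, y k + (a - c) * y i + (b - c) * y j := by
  have hterm : ∀ k, markedVec a b c i j k * y k =
      c * y k + (if k = i then (a - c) * y i else 0) + (if k = j then (b - c) * y j else 0) := by
    intro k
    unfold markedVec
    split_ifs <;> simp_all <;> ring
  simp only [dot, hterm, sum_add_distrib, ← mul_sum, sum_ite_eq', mem_univ, if_true]

lemma natCast_ne_natCast_of_lt {n a b : ℕ} (ha : a < n) (hb : b < n) (hab : a ≠ b) :
    (a : ZMod n) ≠ b := by
  rwa [Ne, ZMod.natCast_eq_natCast_iff', Nat.mod_eq_of_lt ha, Nat.mod_eq_of_lt hb]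

theorem stmt_14 (n d : ℕ) (hn : 3 ≤ n) (hd : 2 ≤ d)
    (x : Fin d → ZMod n)
    (hx : x = fun i : Fin d => if (i : ℕ) = 0 then 0 else if (i : ℕ) = 1 then 2 else 1) :
    ∀ y : Fin d → ZMod n,
      σ n d x y =
        e n (∑ i, y i) * ((‖∑ i, e n (y i)‖ ^ 2 - d : ℝ) : ℂ) := by
  intro y
  have : NeZero n := ⟨by omega⟩
  have h02 : (0 : ZMod n) ≠ 2 := by
    exact_mod_cast natCast_ne_natCast_of_lt (by omega : 0 < n) (by omega : 2 < n) (by decide)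
  have h01 : (0 : ZMod n) ≠ 1 := by
    exact_mod_cast natCast_ne_natCast_of_lt (by omega : 0 < n) (by omega : 1 < n) (by decide)
  have h21 : (2 : ZMod n) ≠ 1 := by
    exact_mod_cast natCast_ne_natCast_of_lt (by omega : 2 < n) (by omega : 1 < n) (by decide)
  obtain rfl : x = markedVec 0 2 1 (⟨0, by omega⟩ : Fin d) ⟨1, by omega⟩ := by
    ext k
    simp [hx, markedVec, Fin.ext_iff]
  rw [σ, orbit_markedVec _ _ _ (by simp [Fin.ext_iff]),
    sum_image ((markedVec_injOn h02 h01 h21).mono fun p hp => (mem_offDiag.1 hp).2.2)]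
  calc ∑ p ∈ univ.offDiag, e n (dot (markedVec 0 2 1 p.1 p.2) y)
      = ∑ p ∈ univ.offDiag, e n (∑ i, y i) * (e n (y p.2) * conj (e n (y p.1))) := by
        refine sum_congr rfl fun p hp => ?_
        rw [dot_markedVec _ _ _ (mem_offDiag.1 hp).2.2]
        simp only [e_eq_stdAddChar, ← AddChar.map_neg_eq_conj, ← AddChar.map_add_eq_mul]
        congr 1
        ring
    _ = _ := by
        rw [← mul_sum, sum_offDiag_mul_conj _ (norm_e n <| y ·), Fintype.card_fin]
        norm_cast
end

section
/- If X is the S_d-orbit of (1,1,...,1,1−d) in (Z/nZ)^d, and the orbit consists of the d cyclic placements of the entry 1−d, then for every y ∈ (Z/nZ)^d, σ_X(y) = Σ_{ℓ=1}^d e(ξ_ℓ/n) where ξ_ℓ = [y] − d·y_ℓ, and ξ_1 + ⋯ + ξ_d = 0 in Z/nZ. Consequently σ_X(y) lies in the range of g(z_1,...,z_{d−1}) = z_1 + ⋯ + z_{d−1} + 1/(z_1⋯z_{d−1}) on the torus 𝕋^{d−1}. -/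
open Finset

lemma e_abs' (n : ℕ) (z : ZMod n) : ‖e n z‖ = 1 := by
  rw [e]
  have : 2 * (Real.pi:ℂ) * Complex.I * z.val / n
      = ((2 * Real.pi * z.val / n : ℝ) : ℂ) * Complex.I := by push_cast; ring
  rw [this, Complex.norm_exp_ofReal_mul_I]

lemma e_zero' (n : ℕ) (hn : 0 < n) : e n 0 = 1 := by
  haveI : NeZero n := ⟨hn.ne'⟩
  simp [e]

lemma e_add' (n : ℕ) (hn : 0 < n) (a b : ZMod n) : e n (a + b) = e n a * e n b := by
  haveI : NeZero n := ⟨hn.ne'⟩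
  have hn' : (n:ℂ) ≠ 0 := by exact_mod_cast hn.ne'
  set q := (a.val + b.val) / n with hq
  have h : a.val + b.val = n * q + (a + b).val := by
    rw [ZMod.val_add]; exact (Nat.div_add_mod _ n).symm
  have h' : ((a.val + b.val : ℕ) : ℂ) = ((n * q + (a+b).val : ℕ) : ℂ) := by rw [h]
  simp only [Nat.cast_add, Nat.cast_mul] at h'
  rw [e, e, e, ← Complex.exp_add, ← one_mul (Complex.exp _),
    ← Complex.exp_nat_mul_two_pi_mul_I q, ← Complex.exp_add]
  congr 1
  have expand : ∀ m : ℕ, 2*(Real.pi:ℂ)*Complex.I*m/n = (2*Real.pi*Complex.I/n) * m :=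
    fun m => by ring
  rw [expand, expand, expand, ← mul_add, h']
  have hc : (2*(Real.pi:ℂ)*Complex.I/n) * n = 2*Real.pi*Complex.I := by field_simp
  linear_combination (-(q:ℂ)) * hc

lemma e_sum' (n : ℕ) (hn : 0 < n) {ι : Type*} (s : Finset ι) (f : ι → ZMod n) :
    e n (∑ i ∈ s, f i) = ∏ i ∈ s, e n (f i) := by
  induction s using Finset.cons_induction with
  | empty => simpa using e_zero' n hn
  | cons a s ha ih => rw [Finset.sum_cons, Finset.prod_cons, e_add' n hn, ih]

lemma e_inv' (n : ℕ) (hn : 0 < n) (a : ZMod n) : (e n (-a))⁻¹ = e n a := by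
  refine inv_eq_of_mul_eq_one_right ?_
  rw [← e_add' n hn, neg_add_cancel, e_zero' n hn]

theorem stmt_15 (n d : ℕ) (hn : 0 < n) (hd : 1 ≤ d)
    (hnd : (1 - (d : ZMod n)) ≠ 1)
    (x : Fin d → ZMod n)
    (hx : x = fun i : Fin d => if (i : ℕ) = d - 1 then 1 - (d : ZMod n) else 1) :
    ∀ y : Fin d → ZMod n,
      σ n d x y = ∑ ℓ : Fin d, e n ((∑ i, y i) - (d : ZMod n) * y ℓ) ∧
      (∑ ℓ : Fin d, ((∑ i, y i) - (d : ZMod n) * y ℓ)) = 0 ∧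
      ∃ z : Fin (d - 1) → ℂ, (∀ j, ‖z j‖ = 1) ∧
        σ n d x y = (∑ j, z j) + (∏ j, z j)⁻¹ := by
  obtain ⟨m, rfl⟩ : ∃ m, d = m + 1 := ⟨d - 1, (Nat.succ_pred_eq_of_pos hd).symm⟩
  intro y
  set c : ZMod n := 1 - ((m+1 : ℕ) : ZMod n) with hc
  set V : Fin (m+1) → (Fin (m+1) → ZMod n) := fun ℓ i => if i = ℓ then c else 1 with hV
  set S : ZMod n := ∑ i, y i with hS
  set ξ : Fin (m+1) → ZMod n := fun ℓ => S - ((m+1 : ℕ) : ZMod n) * y ℓ with hξ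
  have hcne : c ≠ 1 := hnd
  -- orbit equals image of V
  have horb : orbit n (m+1) x = Finset.image V Finset.univ := by
    ext v
    simp only [orbit, Finset.mem_image, Finset.mem_univ, true_and]
    constructor
    · rintro ⟨π, rfl⟩
      refine ⟨π.symm (Fin.last m), ?_⟩
      funext i
      simp only [hV, hx, Function.comp_apply]
      have : (π i : ℕ) = m + 1 - 1 ↔ i = π.symm (Fin.last m) := by
        rw [Equiv.eq_symm_apply]
        constructor
        · intro h; exact Fin.ext (by simpa using h)
        · intro h; rw [h]; simp
      by_cases h : i = π.symm (Fin.last m)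
      · simp [this.mpr h, h]
      · rw [if_neg (fun hh => h (this.mp hh)), if_neg h]
    · rintro ⟨ℓ, rfl⟩
      refine ⟨Equiv.swap ℓ (Fin.last m), ?_⟩
      funext i
      simp only [hV, hx, Function.comp_apply]
      have key : ((Equiv.swap ℓ (Fin.last m)) i : ℕ) = m + 1 - 1 ↔ i = ℓ := by
        have : ((Equiv.swap ℓ (Fin.last m)) i : ℕ) = m + 1 - 1 ↔
            (Equiv.swap ℓ (Fin.last m)) i = Fin.last m := by
          constructor
          · intro h; exact Fin.ext (by simpa using h)
          · intro h; rw [h]; simp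
        rw [this, Equiv.swap_apply_eq_iff, Equiv.swap_apply_right]
      by_cases h : i = ℓ
      · simp [key.mpr h, h]
      · rw [if_neg (fun hh => h (key.mp hh)), if_neg h]
  have hVinj : Function.Injective V := by
    intro a b hab
    by_contra hne
    have := congrFun hab a
    simp only [hV, if_pos rfl, if_neg hne] at this
    exact hcne this
  have hdot : ∀ ℓ, dot (V ℓ) y = ξ ℓ := by
    intro ℓ
    have : ∀ i, V ℓ i * y i = y i + (if i = ℓ then (c - 1) * y i else 0) := by
      intro i
      by_cases h : i = ℓ <;> simp [hV, h] <;> ring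
    rw [dot]
    simp only [this, Finset.sum_add_distrib, Finset.sum_ite_eq' Finset.univ ℓ,
      Finset.mem_univ, if_pos]
    rw [hξ, ← hS]
    simp only [hc]
    ring
  have hσ : σ n (m+1) x y = ∑ ℓ : Fin (m+1), e n (ξ ℓ) := by
    rw [σ, horb, Finset.sum_image (fun a _ b _ h => hVinj h)]
    exact Finset.sum_congr rfl fun ℓ _ => by rw [hdot]
  have hξsum : (∑ ℓ : Fin (m+1), ξ ℓ) = 0 := by
    simp only [hξ, Finset.sum_sub_distrib, ← Finset.mul_sum, ← hS]
    rw [Finset.sum_const, Finset.card_univ, Fintype.card_fin, nsmul_eq_mul]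
    ring
  refine ⟨hσ, hξsum, ?_⟩
  set z : Fin (m+1-1) → ℂ := fun j => e n (ξ (Fin.castSucc (Fin.cast (by simp) j))) with hz
  refine ⟨z, fun j => e_abs' n _, ?_⟩
  have hcast : ∀ (f : Fin m → ℂ), (∑ j : Fin (m+1-1), f (Fin.cast (by simp) j)) = ∑ j : Fin m, f j := by
    intro f
    exact Fintype.sum_equiv (finCongr (by simp)) _ _ (fun j => rfl)
  have hcastp : ∀ (f : Fin m → ℂ), (∏ j : Fin (m+1-1), f (Fin.cast (by simp) j)) = ∏ j : Fin m, f j := by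
    intro f
    exact Fintype.prod_equiv (finCongr (by simp)) _ _ (fun j => rfl)
  have hsumz : (∑ j, z j) = ∑ j : Fin m, e n (ξ (Fin.castSucc j)) := hcast _
  have hprodz : (∏ j, z j) = e n (∑ j : Fin m, ξ (Fin.castSucc j)) := by
    rw [hcastp (fun j => e n (ξ (Fin.castSucc j))), ← e_sum' n hn]
  have hlast : (∑ j : Fin m, ξ (Fin.castSucc j)) = - ξ (Fin.last m) := by
    have := hξsum
    rw [Fin.sum_univ_castSucc] at this
    linear_combination this
  rw [hσ, hsumz, hprodz, hlast, e_inv' n hn, Fin.sum_univ_castSucc]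
end
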